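/- On the set of pairs (n, c), where n ∈ ℕ and c is a K_n-conjugacy class of G_n, the operation (n, class of g) • (k, class of h) := (n + k, K_{n+k}-conjugacy class of g · θ h θ⁻¹) — where g ∈ G_n and h ∈ G_k are representatives and θ ∈ K_{n+k} is any element whose underlying permutation of ℕ sends i to n + i for all 0 ≤ i < k — is well defined (it is independent of the choice of representatives g and h and of the choice of θ) and associative. -/

import Mathlib

noncomputable section

/-- Embedding of permutations of `ℕ` into permutations of `V = X ⊕ (I × ℕ)`,
acting trivially on `X` and on the first factor of `I × ℕ`.  It restricts to an
embedding of `S_∞` into `S(V)`. -/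
def embNat (I X : Type*) (τ : Equiv.Perm ℕ) : Equiv.Perm (X ⊕ I × ℕ) :=
  Equiv.sumCongr (Equiv.refl X) (Equiv.prodCongr (Equiv.refl I) τ)

/-- `τ` fixes every `m ≥ n`, i.e. `τ` belongs to the subgroup `S_n ≤ S_∞`. -/
def fixesFrom (n : ℕ) (τ : Equiv.Perm ℕ) : Prop := ∀ m : ℕ, n ≤ m → τ m = m

/-- `G_n`: the set of elements of `G_∞` fixing every point of `V ∖ V_n`. -/
def Gset {I X : Type*} (Ginf : Subgroup (Equiv.Perm (X ⊕ I × ℕ))) (n : ℕ) :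
    Set (Equiv.Perm (X ⊕ I × ℕ)) :=
  {g | g ∈ Ginf ∧ ∀ (i : I) (m : ℕ), n ≤ m → g (Sum.inr (i, m)) = Sum.inr (i, m)}

/-- `K_n`-conjugacy of elements of `S(V)`:  `g' = κ g κ⁻¹` for some `κ ∈ K_n`,
where `K_n` is the image of `S_n` in `S(V)`. -/
def Kconj {I X : Type*} (n : ℕ) (g g' : Equiv.Perm (X ⊕ I × ℕ)) : Prop :=
  ∃ τ : Equiv.Perm ℕ, fixesFrom n τ ∧ g' = embNat I X τ * g * (embNat I X τ)⁻¹

/-- A permutation of `Fin N` extended to `ℕ` and then to `V`; these elements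
form exactly the subgroup `K_N ≤ S(V)`. -/
def embFin (I X : Type*) (N : ℕ) (σ : Equiv.Perm (Fin N)) : Equiv.Perm (X ⊕ I × ℕ) :=
  embNat I X (σ.extendDomain Fin.equivSubtype)

/-- The element `A_N[j,g] = (1/(N−j)!) Σ_{τ ∈ K_N} τ g τ⁻¹` of `ℂ[G_∞]`
(and `A_N[j,g] = 0` for `j > N`). -/
def AN (I X : Type*) (N j : ℕ) (g : Equiv.Perm (X ⊕ I × ℕ)) :
    MonoidAlgebra ℂ (Equiv.Perm (X ⊕ I × ℕ)) :=
  if j ≤ N then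
    ((Nat.factorial (N - j) : ℂ))⁻¹ •
      ∑ σ : Equiv.Perm (Fin N),
        MonoidAlgebra.of ℂ (Equiv.Perm (X ⊕ I × ℕ))
          (embFin I X N σ * g * (embFin I X N σ)⁻¹)
  else 0


/-- `K_j`-conjugacy, as a relation on the subtype `G_j`. -/
def conjRel {I X : Type*} (Ginf : Subgroup (Equiv.Perm (X ⊕ I × ℕ))) (j : ℕ)
    (a b : {g : Equiv.Perm (X ⊕ I × ℕ) // g ∈ Gset Ginf j}) : Prop :=
  Kconj j (a : Equiv.Perm (X ⊕ I × ℕ)) (b : Equiv.Perm (X ⊕ I × ℕ))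

/-- The set of pairs `(m, K_m-conjugacy class of G_m)`. -/
def Cls {I X : Type*} (Ginf : Subgroup (Equiv.Perm (X ⊕ I × ℕ))) : Type _ :=
  Σ j : ℕ, Quot (conjRel Ginf j)

/-!
Conjugating `h ∈ G_k` by `θ ∈ K_{n+k}` only depends on `θ` on `{0, …, k-1}`, because two such `θ`
differ by a permutation supported on levels `≥ k`, which commutes with `h`. Hence the product may be
computed with one fixed shift `θ`. Changing `h` by `λ ∈ K_k` changes the product by `θ λ θ⁻¹`, which
lives on levels `[n, n+k)` and so commutes with `g ∈ G_n`; changing `g` by `κ ∈ K_n` changes it by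
`κ`, which commutes with the shifted `h`. Associativity reduces to the same independence of `θ`.
-/

open Equiv

section Bullet

variable {I X : Type*}

@[simp] lemma embNat_inr (τ : Perm ℕ) (i : I) (m : ℕ) :
    embNat I X τ (Sum.inr (i, m)) = Sum.inr (i, τ m) := rfl

lemma embNat_mul (σ τ : Perm ℕ) : embNat I X (σ * τ) = embNat I X σ * embNat I X τ := by
  ext (x | ⟨i, m⟩) <;> rfl

lemma embNat_inv (τ : Perm ℕ) : embNat I X τ⁻¹ = (embNat I X τ)⁻¹ :=
  map_inv (MonoidHom.mk' (embNat I X) embNat_mul) τ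

lemma conj_embNat_apply_inr (θ : Perm ℕ) (h : Perm (X ⊕ I × ℕ)) (i : I) (m : ℕ) :
    (embNat I X θ * h * (embNat I X θ)⁻¹) (Sum.inr (i, m)) =
      embNat I X θ (h (Sum.inr (i, θ⁻¹ m))) := by
  rw [← embNat_inv]; rfl

lemma commute_embNat (τ : Perm ℕ) (h : Perm (X ⊕ I × ℕ))
    (hh : ∀ (i : I) (m : ℕ), τ m ≠ m → h (Sum.inr (i, m)) = Sum.inr (i, m)) :
    Commute (embNat I X τ) h := by
  refine Perm.Disjoint.commute fun v => ?_
  rcases v with x | ⟨i, m⟩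
  · exact Or.inl rfl
  · by_cases hm : τ m = m
    · exact Or.inl (by simp [hm])
    · exact Or.inr (hh i m hm)

lemma fixesFrom_inv {n : ℕ} {τ : Perm ℕ} (hτ : fixesFrom n τ) : fixesFrom n τ⁻¹ :=
  fun m hm => by rw [Perm.inv_eq_iff_eq, hτ m hm]

lemma fixesFrom_mono {n n' : ℕ} (hle : n ≤ n') {τ : Perm ℕ} (hτ : fixesFrom n τ) :
    fixesFrom n' τ :=
  fun m hm => hτ m (hle.trans hm)

lemma fixesFrom.finite {n : ℕ} {τ : Perm ℕ} (hτ : fixesFrom n τ) : {m | τ m ≠ m}.Finite :=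
  (Set.finite_Iio n).subset fun m hm => not_le.mp fun hnm => hm (hτ m hnm)

def FixesLevelsFrom (k : ℕ) (h : Perm (X ⊕ I × ℕ)) : Prop :=
  ∀ (i : I) (m : ℕ), k ≤ m → h (Sum.inr (i, m)) = Sum.inr (i, m)

lemma FixesLevelsFrom.mono {k k' : ℕ} (hle : k ≤ k') {h : Perm (X ⊕ I × ℕ)}
    (hh : FixesLevelsFrom k h) : FixesLevelsFrom k' h :=
  fun i m hm => hh i m (hle.trans hm)

lemma FixesLevelsFrom.mul {k : ℕ} {g h : Perm (X ⊕ I × ℕ)} (hg : FixesLevelsFrom k g)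
    (hh : FixesLevelsFrom k h) : FixesLevelsFrom k (g * h) :=
  fun i m hm => by rw [Perm.mul_apply, hh i m hm, hg i m hm]

lemma FixesLevelsFrom.conj_embNat {k : ℕ} {h : Perm (X ⊕ I × ℕ)} (hh : FixesLevelsFrom k h)
    {θ : Perm ℕ} (hθ : fixesFrom k θ) :
    FixesLevelsFrom k (embNat I X θ * h * (embNat I X θ)⁻¹) :=
  fun i m hm => by
    rw [conj_embNat_apply_inr, fixesFrom_inv hθ m hm, hh i m hm, embNat_inr, hθ m hm]

lemma conj_embNat_eq_of_eqOn {k : ℕ} {h : Perm (X ⊕ I × ℕ)} (hh : FixesLevelsFrom k h)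
    {θ θ' : Perm ℕ} (hθθ' : ∀ m < k, θ m = θ' m) :
    embNat I X θ * h * (embNat I X θ)⁻¹ = embNat I X θ' * h * (embNat I X θ')⁻¹ := by
  have hc : Commute (embNat I X (θ'⁻¹ * θ)) h := commute_embNat _ _ fun i m hm =>
    hh i m <| not_lt.mp fun hmk => hm <| by
      rw [Perm.mul_apply, hθθ' m hmk, Perm.inv_def, symm_apply_apply]
  calc embNat I X θ * h * (embNat I X θ)⁻¹
      = embNat I X (θ' * (θ'⁻¹ * θ)) * h * (embNat I X (θ' * (θ'⁻¹ * θ)))⁻¹ := by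
        rw [mul_inv_cancel_left]
    _ = embNat I X θ' * (embNat I X (θ'⁻¹ * θ) * h * (embNat I X (θ'⁻¹ * θ))⁻¹) *
          (embNat I X θ')⁻¹ := by
        rw [embNat_mul (X := X) θ']; group
    _ = embNat I X θ' * h * (embNat I X θ')⁻¹ := by rw [hc.mul_inv_cancel]

def shiftPerm (n k : ℕ) : Perm ℕ where
  toFun i := if i < k then n + i else if i < n + k then i - k else i
  invFun i := if i < n then i + k else if i < n + k then i - n else i
  left_inv i := by dsimp only; split_ifs <;> omega
  right_inv i := by dsimp only; split_ifs <;> omega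

lemma shiftPerm_apply_of_lt {n k i : ℕ} (hi : i < k) : shiftPerm n k i = n + i := by
  simp [shiftPerm, hi]

lemma shiftPerm_inv_apply_of_lt {n k m : ℕ} (hm : m < n) : (shiftPerm n k)⁻¹ m = m + k := by
  simp [shiftPerm, Perm.inv_def, hm]

lemma shiftPerm_fixesFrom (n k : ℕ) : fixesFrom (n + k) (shiftPerm n k) := by
  intro m hm
  simp only [shiftPerm, coe_fn_mk]
  split_ifs <;> omega

def bulletRep (n k : ℕ) (g h : Perm (X ⊕ I × ℕ)) : Perm (X ⊕ I × ℕ) :=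
  g * (embNat I X (shiftPerm n k) * h * (embNat I X (shiftPerm n k))⁻¹)

lemma bulletRep_eq {n k : ℕ} (g : Perm (X ⊕ I × ℕ)) {h : Perm (X ⊕ I × ℕ)}
    (hh : FixesLevelsFrom k h) {θ : Perm ℕ} (hθ : ∀ i < k, θ i = n + i) :
    bulletRep n k g h = g * (embNat I X θ * h * (embNat I X θ)⁻¹) := by
  rw [bulletRep, conj_embNat_eq_of_eqOn hh fun m hm =>
    (shiftPerm_apply_of_lt hm).trans (hθ m hm).symm]

lemma bulletRep_mem {Ginf : Subgroup (Perm (X ⊕ I × ℕ))}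
    (hGS : ∀ τ : Perm ℕ, {m : ℕ | τ m ≠ m}.Finite → embNat I X τ ∈ Ginf)
    {n k : ℕ} {g h : Perm (X ⊕ I × ℕ)} (hg : g ∈ Gset Ginf n) (hh : h ∈ Gset Ginf k) :
    bulletRep n k g h ∈ Gset Ginf (n + k) := by
  have hθ : embNat I X (shiftPerm n k) ∈ Ginf := hGS _ (shiftPerm_fixesFrom n k).finite
  refine ⟨Ginf.mul_mem hg.1 (Ginf.mul_mem (Ginf.mul_mem hθ hh.1) (Ginf.inv_mem hθ)), ?_⟩
  exact (FixesLevelsFrom.mono (Nat.le_add_right n k) hg.2).mul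
    ((FixesLevelsFrom.mono (Nat.le_add_left k n) hh.2).conj_embNat (shiftPerm_fixesFrom n k))

lemma conj_shiftPerm_apply_of_lt {n k : ℕ} {h : Perm (X ⊕ I × ℕ)} (hh : FixesLevelsFrom k h)
    (i : I) {m : ℕ} (hm : m < n) :
    (embNat I X (shiftPerm n k) * h * (embNat I X (shiftPerm n k))⁻¹) (Sum.inr (i, m)) =
      Sum.inr (i, m) := by
  rw [conj_embNat_apply_inr, hh i _ (by rw [shiftPerm_inv_apply_of_lt hm]; omega), embNat_inr,
    Perm.inv_def, apply_symm_apply]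

lemma Kconj.bulletRep_left {n k : ℕ} {g g' h : Perm (X ⊕ I × ℕ)} (hh : FixesLevelsFrom k h)
    (hK : Kconj n g g') : Kconj (n + k) (bulletRep n k g h) (bulletRep n k g' h) := by
  obtain ⟨κ, hκ, rfl⟩ := hK
  refine ⟨κ, fixesFrom_mono (Nat.le_add_right n k) hκ, ?_⟩
  have hc : Commute (embNat I X κ)
      (embNat I X (shiftPerm n k) * h * (embNat I X (shiftPerm n k))⁻¹) :=
    commute_embNat _ _ fun i m hm =>
      conj_shiftPerm_apply_of_lt hh i (not_le.mp fun hnm => hm (hκ m hnm))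
  rw [bulletRep, bulletRep, mul_assoc _ (embNat I X κ)⁻¹, hc.inv_left.eq]
  group

lemma Kconj.bulletRep_right {n k : ℕ} {g h h' : Perm (X ⊕ I × ℕ)} (hg : FixesLevelsFrom n g)
    (hK : Kconj k h h') : Kconj (n + k) (bulletRep n k g h) (bulletRep n k g h') := by
  obtain ⟨l, hl, rfl⟩ := hK
  rw [bulletRep, bulletRep]
  set θ := shiftPerm n k
  have hθ : fixesFrom (n + k) θ := shiftPerm_fixesFrom n k
  refine ⟨θ * l * θ⁻¹, fun m hm => ?_, ?_⟩
  · simp only [Perm.mul_apply, fixesFrom_inv hθ m hm, hl m (by omega), hθ m hm]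
  -- `θ l θ⁻¹` moves only levels in `θ({0, …, k-1}) = [n, n+k)`, where `g` acts trivially.
  have hc : Commute (embNat I X (θ * l * θ⁻¹)) g := commute_embNat _ _ fun i m hm =>
    hg i m <| not_lt.mp fun hmn => hm <| by
      rw [Perm.mul_apply, Perm.mul_apply, hl _ (by rw [shiftPerm_inv_apply_of_lt hmn]; omega),
        Perm.inv_def, apply_symm_apply]
  rw [embNat_mul, embNat_mul, embNat_inv] at hc ⊢
  rw [← mul_assoc _ g, hc.eq]
  group

lemma bulletRep_assoc {n k l : ℕ} (g : Perm (X ⊕ I × ℕ)) {h f : Perm (X ⊕ I × ℕ)}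
    (hh : FixesLevelsFrom k h) (hf : FixesLevelsFrom l f) :
    bulletRep (n + k) l (bulletRep n k g h) f = bulletRep n (k + l) g (bulletRep k l h f) := by
  rw [bulletRep_eq _ hh fun i hi => shiftPerm_apply_of_lt (n := n) (k := k + l) (by omega),
    bulletRep_eq _ hf (θ := shiftPerm n (k + l) * shiftPerm k l) fun i hi => by
      rw [Perm.mul_apply, shiftPerm_apply_of_lt hi, shiftPerm_apply_of_lt (by omega), add_assoc],
    bulletRep, bulletRep, embNat_mul]
  group

lemma Cls.mk_eq_mk {Ginf : Subgroup (Perm (X ⊕ I × ℕ))} {j j' : ℕ} (hj : j = j')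
    {g g' : Perm (X ⊕ I × ℕ)} (hgg' : g = g') (hg : g ∈ Gset Ginf j) (hg' : g' ∈ Gset Ginf j') :
    (⟨j, Quot.mk _ ⟨g, hg⟩⟩ : Cls Ginf) = ⟨j', Quot.mk _ ⟨g', hg'⟩⟩ := by
  subst hj hgg'; rfl

def bulletOp (Ginf : Subgroup (Perm (X ⊕ I × ℕ)))
    (hGS : ∀ τ : Perm ℕ, {m : ℕ | τ m ≠ m}.Finite → embNat I X τ ∈ Ginf) :
    Cls Ginf → Cls Ginf → Cls Ginf
  | ⟨n, x⟩, ⟨k, y⟩ => ⟨n + k, Quot.lift₂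
      (fun (a : {g // g ∈ Gset Ginf n}) (b : {h // h ∈ Gset Ginf k}) =>
        Quot.mk (conjRel Ginf (n + k)) ⟨bulletRep n k a.1 b.1, bulletRep_mem hGS a.2 b.2⟩)
      (fun a _ _ hb => Quot.sound (Kconj.bulletRep_right a.2.2 hb))
      (fun _ _ b ha => Quot.sound (Kconj.bulletRep_left b.2.2 ha)) x y⟩

end Bullet

theorem bullet_product_welldefined_and_associative_general
    {I X : Type*}
    (Ginf : Subgroup (Equiv.Perm (X ⊕ I × ℕ)))
    (hGS : ∀ τ : Equiv.Perm ℕ, {m : ℕ | τ m ≠ m}.Finite → embNat I X τ ∈ Ginf) :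
    ∃ op : Cls Ginf → Cls Ginf → Cls Ginf,
      (∀ (n k : ℕ) (g h : Equiv.Perm (X ⊕ I × ℕ))
          (hg : g ∈ Gset Ginf n) (hh : h ∈ Gset Ginf k)
          (θ : Equiv.Perm ℕ), fixesFrom (n + k) θ → (∀ i : ℕ, i < k → θ i = n + i) →
        ∃ hmem : g * (embNat I X θ * h * (embNat I X θ)⁻¹) ∈ Gset Ginf (n + k),
          op ⟨n, Quot.mk _ ⟨g, hg⟩⟩ ⟨k, Quot.mk _ ⟨h, hh⟩⟩
            = ⟨n + k, Quot.mk _ ⟨g * (embNat I X θ * h * (embNat I X θ)⁻¹), hmem⟩⟩) ∧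
      (∀ x y z : Cls Ginf, op (op x y) z = op x (op y z)) := by
  refine ⟨bulletOp Ginf hGS, fun n k g h hg hh θ _ hθ => ?_, ?_⟩
  · have hrep := bulletRep_eq g hh.2 hθ
    exact ⟨hrep ▸ bulletRep_mem hGS hg hh, Cls.mk_eq_mk rfl hrep _ _⟩
  · rintro ⟨n, x⟩ ⟨k, y⟩ ⟨l, z⟩
    induction x using Quot.ind with | _ a => ?_
    induction y using Quot.ind with | _ b => ?_
    induction z using Quot.ind with | _ c => ?_
    exact Cls.mk_eq_mk (add_assoc n k l) (bulletRep_assoc a.1 b.2.2 c.2.2) _ _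

/-- On the set of pairs `(n, K_n-conjugacy class of G_n)`, the operation
`(n, class of g) • (k, class of h) := (n+k, class of g · θ h θ⁻¹)` — where `θ ∈ K_{n+k}`
is any element whose underlying permutation of `ℕ` sends `i` to `n + i` for `0 ≤ i < k` —
is well defined (independent of the representatives `g`, `h` and of `θ`, and its result
is indeed a class of `G_{n+k}`) and associative:  there is an operation `op` on classes
which on every pair of representatives and for every admissible `θ` is computed by the
above formula, and `op` is associative. -/
theorem bullet_product_welldefined_and_associative
    {I X : Type*} [Finite I] [Countable X]
    (Ginf : Subgroup (Equiv.Perm (X ⊕ I × ℕ)))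
    (hGfs : ∀ g ∈ Ginf, {v : X ⊕ I × ℕ | g v ≠ v}.Finite)
    (hGS : ∀ τ : Equiv.Perm ℕ, {m : ℕ | τ m ≠ m}.Finite → embNat I X τ ∈ Ginf) :
    ∃ op : Cls Ginf → Cls Ginf → Cls Ginf,
      (∀ (n k : ℕ) (g h : Equiv.Perm (X ⊕ I × ℕ))
          (hg : g ∈ Gset Ginf n) (hh : h ∈ Gset Ginf k)
          (θ : Equiv.Perm ℕ), fixesFrom (n + k) θ → (∀ i : ℕ, i < k → θ i = n + i) →
        ∃ hmem : g * (embNat I X θ * h * (embNat I X θ)⁻¹) ∈ Gset Ginf (n + k),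
          op ⟨n, Quot.mk _ ⟨g, hg⟩⟩ ⟨k, Quot.mk _ ⟨h, hh⟩⟩
            = ⟨n + k, Quot.mk _ ⟨g * (embNat I X θ * h * (embNat I X θ)⁻¹), hmem⟩⟩) ∧
      (∀ x y z : Cls Ginf, op (op x y) z = op x (op y z)) :=
  bullet_product_welldefined_and_associative_general Ginf hGS
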